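/- Let F be a field, A ∈ B ≤ M(n,F), and W* the limit of the second Wong sequence of (A,B). If B has a cork(A)-shrunk subspace, then W* ⊆ im(A). Conversely, if W* ⊆ im(A), then B has a cork(A)-shrunk subspace. (Equivalence of the two conditions.) -/

import Mathlib

open Matrix Module

/-- The second Wong sequence of `(A, 𝓑)`: `W₀ = 0`, `W_{i+1} = 𝓑(A⁻¹(W_i))`. -/
def wongSeq {F : Type*} [Field F] {n : ℕ}
    (𝓑 : Submodule F (Matrix (Fin n) (Fin n) F)) (A : Matrix (Fin n) (Fin n) F) :
    ℕ → Submodule F (Fin n → F)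
  | 0 => ⊥
  | i + 1 => Submodule.span F
      {w : Fin n → F | ∃ B ∈ 𝓑, ∃ v : Fin n → F,
        A.mulVec v ∈ wongSeq 𝓑 A i ∧ w = B.mulVec v}

/-!
Write `K = ker A`, so `dim K = cork(A)`, and use `dim U = dim A(U) + dim (U ∩ K)`.
If `U` is `cork(A)`-shrunk, then `A(U) ≤ 𝓑(U)` squeezes this into `K ≤ U` and `𝓑(U) = A(U)`;
hence `A(U)` is invariant under `W ↦ 𝓑(A⁻¹ W)` and contains every `Wᵢ`, and lies in `im A`.
Conversely, the dimensions of the `Wᵢ` stabilise by step `n`, so `U = A⁻¹(W*)` has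
`𝓑(U) = W*`, and if `W* ≤ im A` then `dim U = dim W* + dim K`.
-/

namespace Submodule

variable {𝕜 V V₂ : Type*} [DivisionRing 𝕜] [AddCommGroup V] [Module 𝕜 V]
  [AddCommGroup V₂] [Module 𝕜 V₂]

theorem finrank_map_add_finrank_inf_ker [FiniteDimensional 𝕜 V] (f : V →ₗ[𝕜] V₂)
    (p : Submodule 𝕜 V) :
    finrank 𝕜 (p.map f) + finrank 𝕜 (p ⊓ LinearMap.ker f : Submodule 𝕜 V) = finrank 𝕜 p := by
  have h := LinearMap.finrank_range_add_finrank_ker (f.domRestrict p)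
  rw [LinearMap.range_domRestrict, LinearMap.ker_domRestrict,
    ← finrank_map_subtype_eq p, map_comap_subtype] at h
  exact h

theorem exists_le_finrank_eq_succ_of_monotone [FiniteDimensional 𝕜 V]
    {s : ℕ → Submodule 𝕜 V} (hs : Monotone s) : ∃ k ≤ finrank 𝕜 V, s k = s (k + 1) := by
  by_contra! h
  have grow : ∀ i ≤ finrank 𝕜 V + 1, i ≤ finrank 𝕜 (s i) := by
    intro i
    induction i with
    | zero => simp
    | succ i ih =>
      intro hi
      have hlt := finrank_lt_finrank_of_lt ((hs (Nat.le_add_right i 1)).lt_of_ne (h i (by omega)))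
      have := ih (by omega)
      omega
  have := (grow _ le_rfl).trans (finrank_le _)
  omega

theorem isFixedPt_iterate_finrank_bot [FiniteDimensional 𝕜 V]
    {Φ : Submodule 𝕜 V → Submodule 𝕜 V} (hΦ : Monotone Φ) :
    Function.IsFixedPt Φ (Φ^[finrank 𝕜 V] ⊥) := by
  obtain ⟨k, hk, hfix⟩ :=
    exists_le_finrank_eq_succ_of_monotone (hΦ.monotone_iterate_of_le_map bot_le)
  have hfix : Function.IsFixedPt Φ (Φ^[k] ⊥) := by
    rw [Function.IsFixedPt, ← Function.iterate_succ_apply' Φ k, ← hfix]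
  rwa [← Nat.sub_add_cancel hk, Function.iterate_add_apply, Function.iterate_fixed hfix]

end Submodule

section Wong

variable {F : Type*} [Field F] {n : ℕ}
  (𝓑 : Submodule F (Matrix (Fin n) (Fin n) F)) (A : Matrix (Fin n) (Fin n) F)

/-- The paper's `𝓑(U)`. -/
def spanImage (U : Submodule F (Fin n → F)) : Submodule F (Fin n → F) :=
  Submodule.span F {w | ∃ B ∈ 𝓑, ∃ u ∈ U, w = B.mulVec u}

def wongStep (W : Submodule F (Fin n → F)) : Submodule F (Fin n → F) :=
  spanImage 𝓑 (W.comap A.mulVecLin)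

variable {𝓑 A}

theorem spanImage_mono : Monotone (spanImage 𝓑) := by
  intro U V hUV
  apply Submodule.span_mono
  rintro w ⟨B, hB, u, hu, rfl⟩
  exact ⟨B, hB, u, hUV hu, rfl⟩

theorem map_le_spanImage (hA : A ∈ 𝓑) (U : Submodule F (Fin n → F)) :
    U.map A.mulVecLin ≤ spanImage 𝓑 U := by
  rintro _ ⟨u, hu, rfl⟩
  exact Submodule.subset_span ⟨A, hA, u, hu, rfl⟩

theorem wongStep_mono : Monotone (wongStep 𝓑 A) :=
  fun _ _ h => spanImage_mono (Submodule.comap_mono h)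

variable (𝓑 A) in
theorem wongSeq_eq_iterate (i : ℕ) : wongSeq 𝓑 A i = (wongStep 𝓑 A)^[i] ⊥ := by
  induction i with
  | zero => rfl
  | succ i ih => rw [Function.iterate_succ_apply', ← ih]; rfl

variable (𝓑 A) in
theorem wongStep_wongSeq_self : wongStep 𝓑 A (wongSeq 𝓑 A n) = wongSeq 𝓑 A n := by
  have := Submodule.isFixedPt_iterate_finrank_bot (wongStep_mono (𝓑 := 𝓑) (A := A))
  rwa [Module.finrank_fin_fun, ← wongSeq_eq_iterate] at this

theorem wongSeq_le_of_wongStep_le {V : Submodule F (Fin n → F)} (hV : wongStep 𝓑 A V ≤ V)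
    (i : ℕ) : wongSeq 𝓑 A i ≤ V := by
  induction i with
  | zero => exact bot_le
  | succ i ih => exact (wongStep_mono ih).trans hV

variable (A) in
theorem finrank_ker_mulVecLin : finrank F (LinearMap.ker A.mulVecLin) = n - A.rank := by
  have h := LinearMap.finrank_range_add_finrank_ker A.mulVecLin
  rw [Module.finrank_fin_fun] at h
  rw [Matrix.rank]
  omega

theorem ker_le_and_spanImage_eq_map_of_shrunk (hA : A ∈ 𝓑) {U : Submodule F (Fin n → F)}
    (hU : finrank F (spanImage 𝓑 U) + finrank F (LinearMap.ker A.mulVecLin) ≤ finrank F U) :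
    LinearMap.ker A.mulVecLin ≤ U ∧ spanImage 𝓑 U = U.map A.mulVecLin := by
  have hmap := map_le_spanImage hA U
  have hdim := Submodule.finrank_map_add_finrank_inf_ker A.mulVecLin U
  have hmap_dim := Submodule.finrank_mono hmap
  have hinf : U ⊓ LinearMap.ker A.mulVecLin = LinearMap.ker A.mulVecLin :=
    Submodule.eq_of_le_of_finrank_le inf_le_right (by omega)
  refine ⟨inf_eq_right.mp hinf, ?_⟩
  rw [hinf] at hdim
  exact (Submodule.eq_of_le_of_finrank_le hmap (by omega)).symm

theorem wongSeq_le_range_of_shrunk (hA : A ∈ 𝓑) {U : Submodule F (Fin n → F)}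
    (hU : finrank F (spanImage 𝓑 U) + finrank F (LinearMap.ker A.mulVecLin) ≤ finrank F U)
    (i : ℕ) : wongSeq 𝓑 A i ≤ LinearMap.range A.mulVecLin := by
  obtain ⟨hker, himage⟩ := ker_le_and_spanImage_eq_map_of_shrunk hA hU
  have hinv : wongStep 𝓑 A (U.map A.mulVecLin) ≤ U.map A.mulVecLin := by
    rw [wongStep, Submodule.comap_map_eq, sup_eq_left.mpr hker, himage]
  exact (wongSeq_le_of_wongStep_le hinv i).trans LinearMap.map_le_range

theorem shrunk_of_wongSeq_le_range (hW : wongSeq 𝓑 A n ≤ LinearMap.range A.mulVecLin) :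
    finrank F (spanImage 𝓑 ((wongSeq 𝓑 A n).comap A.mulVecLin))
        + finrank F (LinearMap.ker A.mulVecLin)
      = finrank F ((wongSeq 𝓑 A n).comap A.mulVecLin) := by
  have hdim := Submodule.finrank_map_add_finrank_inf_ker A.mulVecLin
    ((wongSeq 𝓑 A n).comap A.mulVecLin)
  rw [Submodule.map_comap_eq_self hW, inf_eq_right.mpr (LinearMap.ker_le_comap _)] at hdim
  have hstable : spanImage 𝓑 ((wongSeq 𝓑 A n).comap A.mulVecLin) = wongSeq 𝓑 A n :=
    wongStep_wongSeq_self 𝓑 A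
  rw [hstable, hdim]

end Wong

/-- `𝓑` has a `cork(A)`-shrunk subspace if and only if the limit `W*` of the
second Wong sequence of `(A, 𝓑)` (reached after at most `n` steps) is contained
in the image of `A`. -/
theorem stmt9 {F : Type*} [Field F] {n : ℕ}
    (𝓑 : Submodule F (Matrix (Fin n) (Fin n) F)) (A : Matrix (Fin n) (Fin n) F)
    (hA : A ∈ 𝓑) :
    (∃ U : Submodule F (Fin n → F),
      finrank F (Submodule.span F
          {w : Fin n → F | ∃ B ∈ 𝓑, ∃ u ∈ U, w = B.mulVec u}) + (n - A.rank)
        ≤ finrank F U) ↔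
    wongSeq 𝓑 A n ≤ LinearMap.range A.mulVecLin := by
  rw [← finrank_ker_mulVecLin A]
  exact ⟨fun ⟨_, hU⟩ => wongSeq_le_range_of_shrunk hA hU n,
    fun hW => ⟨_, (shrunk_of_wongSeq_le_range hW).le⟩⟩
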